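/- arXiv:1409.6475 — 8 statements merged into one kernel-verified Lean document; each statement's English description precedes it below -/
import Mathlib

section
/- Let n, m be natural numbers, let S : ℝⁿ × ℝᵐ → ℝ and g : ℝᵐ → ℝ be smooth (C^∞), and let y : ℝⁿ → ℝᵐ be a differentiable map satisfying, for every x ∈ ℝⁿ, the fixed-point equation y(x) = ∂S/∂q(x, ∇g(y(x))). Set q(x) := ∇g(y(x)) and define f : ℝⁿ → ℝ by f(x) = S(x, q(x)) − ⟨y(x), q(x)⟩ + g(y(x)). Then f is differentiable and ∇f(x) = ∂S/∂x(x, q(x)) for every x. Moreover, if for every x the pair (y(x), q(x)) is the unique solution of the system q = ∇g(y), y = ∂S/∂q(x, q), then the composed relation Λ = {(x, p) ∈ ℝⁿ × ℝⁿ : ∃ y q, p = ∂S/∂x(x, q) ∧ q = ∇g(y) ∧ y = ∂S/∂q(x, q)} is exactly the graph {(x, ∇f(x)) : x ∈ ℝⁿ} of the derivative of f. -/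
open scoped RealInnerProductSpace

noncomputable section

abbrev E (n : ℕ) : Type := EuclideanSpace ℝ (Fin n)

/-- Finite-dimensional even model of Theorem-Definition 1 (generalized pullback):
the composition of the canonical relation with generating function `S` with the graph
of `∇g` is the graph of `∇f` for `f(x) = S(x,q(x)) - ⟨y(x),q(x)⟩ + g(y(x))`. -/
theorem generalized_pullback_graph
    (n m : ℕ) (S : E n × E m → ℝ) (g : E m → ℝ)
    (hS : ContDiff ℝ (⊤ : ℕ∞) S) (hg : ContDiff ℝ (⊤ : ℕ∞) g)
    (y : E n → E m) (hy : Differentiable ℝ y)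
    (hfix : ∀ x, y x = gradient (fun q => S (x, q)) (gradient g (y x)))
    (q : E n → E m) (hq : ∀ x, q x = gradient g (y x))
    (f : E n → ℝ)
    (hf : ∀ x, f x = S (x, q x) - ⟪y x, q x⟫ + g (y x)) :
    (Differentiable ℝ f ∧
      ∀ x, gradient f x = gradient (fun x' => S (x', q x)) x) ∧
    ((∀ (x : E n) (y' q' : E m),
        (q' = gradient g y' ∧ y' = gradient (fun q'' => S (x, q'')) q') →
        y' = y x ∧ q' = q x) →
      {xp : E n × E n | ∃ y' q',
          xp.2 = gradient (fun x' => S (x', q')) xp.1 ∧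
          q' = gradient g y' ∧
          y' = gradient (fun q'' => S (xp.1, q'')) q'} =
        {xp : E n × E n | xp.2 = gradient f xp.1}) := by
  have hSd : Differentiable ℝ S := hS.differentiable (by simp)
  have hgd : Differentiable ℝ g := hg.differentiable (by simp)
  have hgrad_g : Differentiable ℝ (gradient g) := by
    have h1 : Differentiable ℝ (fderiv ℝ g) := (hg.fderiv_right (m := 1) (by exact WithTop.coe_le_coe.mpr le_top)).differentiable (by simp)
    exact fun z =>
      ((InnerProductSpace.toDual ℝ (E m)).symm.differentiable.differentiableAt).comp z (h1 z)
  have hqd : Differentiable ℝ q := by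
    have h2 : Differentiable ℝ fun x => gradient g (y x) := hgrad_g.comp hy
    have : q = fun x => gradient g (y x) := funext hq
    rw [this]; exact h2
  -- key derivative computation
  have key : ∀ x₀ : E n, HasFDerivAt f
      ((fderiv ℝ S (x₀, q x₀)).comp (ContinuousLinearMap.inl ℝ (E n) (E m))) x₀ := by
    intro x₀
    set q₀ := q x₀ with hq₀
    set y₀ := y x₀ with hy₀
    set A := fderiv ℝ S (x₀, q₀) with hA
    have hAd : HasFDerivAt S A (x₀, q₀) := (hSd _).hasFDerivAt
    set Q := fderiv ℝ q x₀ with hQdef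
    set Y := fderiv ℝ y x₀ with hYdef
    have hQ : HasFDerivAt q Q x₀ := (hqd x₀).hasFDerivAt
    have hY : HasFDerivAt y Y x₀ := (hy x₀).hasFDerivAt
    -- slice in q: derivative is A ∘ inr
    have hslice_q : HasFDerivAt (fun q'' => S (x₀, q''))
        (A.comp (ContinuousLinearMap.inr ℝ (E n) (E m))) q₀ := by
      have h : HasFDerivAt (fun q'' : E m => ((x₀, q'') : E n × E m))
          (ContinuousLinearMap.inr ℝ (E n) (E m)) q₀ := by
        have := HasFDerivAt.prodMk (hasFDerivAt_const (𝕜 := ℝ) x₀ q₀) (hasFDerivAt_id (𝕜 := ℝ) q₀)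
        exact this
      exact hAd.comp q₀ h
    -- y₀ is the gradient of the q-slice
    have hy_grad : y₀ = gradient (fun q'' => S (x₀, q'')) q₀ := by
      rw [hq₀, hq x₀]; exact hfix x₀
    have hAy : ∀ v : E m, A (0, v) = ⟪y₀, v⟫ := by
      intro v
      have h1 : gradient (fun q'' => S (x₀, q'')) q₀ =
          (InnerProductSpace.toDual ℝ (E m)).symm (A.comp (ContinuousLinearMap.inr ℝ (E n) (E m))) := by
        rw [gradient, hslice_q.fderiv]
      have h2 : (InnerProductSpace.toDual ℝ (E m)) y₀ =
          A.comp (ContinuousLinearMap.inr ℝ (E n) (E m)) := by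
        rw [hy_grad, h1, LinearIsometryEquiv.apply_symm_apply]
      have := congrArg (fun L : E m →L[ℝ] ℝ => L v) h2
      simpa [InnerProductSpace.toDual_apply_apply] using this.symm
    have hgq : ∀ v : E m, fderiv ℝ g y₀ v = ⟪q₀, v⟫ := by
      intro v
      have h2 : (InnerProductSpace.toDual ℝ (E m)) q₀ = fderiv ℝ g y₀ := by
        rw [hq₀, hq x₀, gradient, LinearIsometryEquiv.apply_symm_apply]
      have := congrArg (fun L : E m →L[ℝ] ℝ => L v) h2
      simpa [InnerProductSpace.toDual_apply_apply] using this.symm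
    -- assemble the derivative of f
    have h1 : HasFDerivAt (fun x => S (x, q x))
        (A.comp ((ContinuousLinearMap.id ℝ (E n)).prod Q)) x₀ := by
      have h : HasFDerivAt (fun x : E n => ((x, q x) : E n × E m))
          ((ContinuousLinearMap.id ℝ (E n)).prod Q) x₀ := HasFDerivAt.prodMk (hasFDerivAt_id x₀) hQ
      exact hAd.comp x₀ h
    have h2 : HasFDerivAt (fun x => ⟪y x, q x⟫)
        ((fderivInnerCLM ℝ (y₀, q₀)).comp (Y.prod Q)) x₀ := hY.inner ℝ hQ
    have h3 : HasFDerivAt (fun x => g (y x)) ((fderiv ℝ g y₀).comp Y) x₀ :=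
      (hgd y₀).hasFDerivAt.comp x₀ hY
    have hsum := (h1.sub h2).add h3
    have hfeq : f = fun x => S (x, q x) - ⟪y x, q x⟫ + g (y x) := funext hf
    rw [hfeq]
    have heq : A.comp ((ContinuousLinearMap.id ℝ (E n)).prod Q) -
        (fderivInnerCLM ℝ (y₀, q₀)).comp (Y.prod Q) + (fderiv ℝ g y₀).comp Y =
        A.comp (ContinuousLinearMap.inl ℝ (E n) (E m)) := by
      ext v
      have hsplit : A (v, Q v) = A (v, 0) + A (0, Q v) := by
        rw [← map_add]; norm_num
      simp only [ContinuousLinearMap.add_apply, ContinuousLinearMap.sub_apply,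
        ContinuousLinearMap.comp_apply, ContinuousLinearMap.prod_apply,
        ContinuousLinearMap.coe_id', id_eq, ContinuousLinearMap.inl_apply,
        fderivInnerCLM_apply, hsplit, hAy, hgq]
      rw [real_inner_comm q₀ (Y v)]
      ring
    rw [← heq]
    exact hsum
  have hdiff : Differentiable ℝ f := fun x => (key x).differentiableAt
  have hgradf : ∀ x, gradient f x = gradient (fun x' => S (x', q x)) x := by
    intro x
    have hslice_x : HasFDerivAt (fun x' => S (x', q x))
        ((fderiv ℝ S (x, q x)).comp (ContinuousLinearMap.inl ℝ (E n) (E m))) x := by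
      have h : HasFDerivAt (fun x' : E n => ((x', q x) : E n × E m))
          (ContinuousLinearMap.inl ℝ (E n) (E m)) x := by
        have := HasFDerivAt.prodMk (hasFDerivAt_id (𝕜 := ℝ) x) (hasFDerivAt_const (𝕜 := ℝ) (q x) x)
        exact this
      exact ((hSd _).hasFDerivAt).comp x h
    rw [gradient, gradient, (key x).fderiv, hslice_x.fderiv]
  refine ⟨⟨hdiff, hgradf⟩, ?_⟩
  intro hu
  ext ⟨x, p⟩
  simp only [Set.mem_setOf_eq]
  constructor
  · rintro ⟨y', q', hp, hq', hy'⟩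
    obtain ⟨hy1, hq1⟩ := hu x y' q' ⟨hq', hy'⟩
    rw [hgradf x, hp, hq1]
  · intro hp
    refine ⟨y x, q x, ?_, hq x, ?_⟩
    · rw [hp, hgradf x]
    · rw [hq x]; exact hfix x
end
end

section
/- Let S : ℝⁿ × ℝᵐ → ℝ and g : ℝᵐ → ℝ be smooth, let y : ℝⁿ → ℝᵐ be a differentiable map with y(x) = ∂S/∂q(x, ∇g(y(x))) for all x, and let f : ℝⁿ → ℝ be the generalized pullback f(x) = S(x, ∇g(y(x))) − ⟨y(x), ∇g(y(x))⟩ + g(y(x)). Suppose the Hamiltonians H₁ : ℝⁿ × ℝⁿ → ℝ and H₂ : ℝᵐ × ℝᵐ → ℝ are Φ-related, i.e. H₁(x, ∂S/∂x(x, q)) = H₂(∂S/∂q(x, q), q) for all (x, q) ∈ ℝⁿ × ℝᵐ. Then for every x ∈ ℝⁿ: H₁(x, ∇f(x)) = H₂(y(x), ∇g(y(x))). Equivalently, the Hamilton–Jacobi infinitesimal shifts are intertwined by the generalized pullback: X_{H₁}[f](x) = X_{H₂}[g](y(x)), where for a Hamiltonian H one sets X_H[f](x) := H(x, ∇f(x)).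 -/
open scoped RealInnerProductSpace

noncomputable section

section Aux

variable {F : Type*} [NormedAddCommGroup F] [InnerProductSpace ℝ F] [CompleteSpace F]

lemma fderiv_eq_inner_gradient (h : F → ℝ) (z v : F) :
    fderiv ℝ h z v = ⟪gradient h z, v⟫ := by
  simp [gradient]

end Aux

/-- Finite-dimensional even model of the paper's main theorem: if the Hamiltonians
`H₁` and `H₂` are `Φ`-related for the canonical relation `Φ` with generating function `S`,
then the Hamilton–Jacobi infinitesimal shifts are intertwined by the generalized
pullback `f = Φ*[g]`. -/
theorem hamilton_jacobi_related
    (n m : ℕ) (S : E n × E m → ℝ) (g : E m → ℝ)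
    (hS : ContDiff ℝ (⊤ : ℕ∞) S) (hg : ContDiff ℝ (⊤ : ℕ∞) g)
    (y : E n → E m) (hy : Differentiable ℝ y)
    (hfix : ∀ x, y x = gradient (fun q => S (x, q)) (gradient g (y x)))
    (f : E n → ℝ)
    (hf : ∀ x, f x = S (x, gradient g (y x)) - ⟪y x, gradient g (y x)⟫ + g (y x))
    (H₁ : E n × E n → ℝ) (H₂ : E m × E m → ℝ)
    (hrel : ∀ (x : E n) (q : E m),
      H₁ (x, gradient (fun x' => S (x', q)) x) =
        H₂ (gradient (fun q' => S (x, q')) q, q)) :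
    ∀ x : E n, H₁ (x, gradient f x) = H₂ (y x, gradient g (y x)) := by
  intro x
  -- notation
  set q : E n → E m := fun x' => gradient g (y x') with hq_def
  have hgrad_g : Differentiable ℝ (gradient g) := by
    have h1 : Differentiable ℝ (fderiv ℝ g) :=
      (hg.fderiv_right (m := (⊤ : ℕ∞)) le_rfl).differentiable (by simp)
    exact fun z => ((InnerProductSpace.toDual ℝ (E m)).symm.toContinuousLinearEquiv
      |>.differentiableAt).comp z (h1 z)
  have hq : DifferentiableAt ℝ q x := (hgrad_g (y x)).comp x (hy x)
  set q0 : E m := q x with hq0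
  set Dy : E n →L[ℝ] E m := fderiv ℝ y x with hDy
  set Dq : E n →L[ℝ] E m := fderiv ℝ q x with hDq
  set DS : E n × E m →L[ℝ] ℝ := fderiv ℝ S (x, q0) with hDS
  have hSdiff : DifferentiableAt ℝ S (x, q0) := (hS.differentiable (by simp)) (x, q0)
  -- fderiv of x' ↦ (x', q x')
  have hpair : HasFDerivAt (fun x' => (x', q x'))
      ((ContinuousLinearMap.id ℝ (E n)).prod Dq) x :=
    HasFDerivAt.prodMk (hasFDerivAt_id x) hq.hasFDerivAt
  -- first term
  have h1 : HasFDerivAt (fun x' => S (x', q x'))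
      (DS.comp ((ContinuousLinearMap.id ℝ (E n)).prod Dq)) x :=
    hSdiff.hasFDerivAt.comp x hpair
  -- second term
  have h2 : HasFDerivAt (fun x' => ⟪y x', q x'⟫)
      ((fderivInnerCLM ℝ (y x, q0)).comp (Dy.prod Dq)) x :=
    (hy x).hasFDerivAt.inner ℝ hq.hasFDerivAt
  -- third term
  have h3 : HasFDerivAt (fun x' => g (y x'))
      ((fderiv ℝ g (y x)).comp Dy) x :=
    ((hg.differentiable (by simp)) (y x)).hasFDerivAt.comp x (hy x).hasFDerivAt
  have hfd : HasFDerivAt f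
      (DS.comp ((ContinuousLinearMap.id ℝ (E n)).prod Dq)
        - (fderivInnerCLM ℝ (y x, q0)).comp (Dy.prod Dq)
        + (fderiv ℝ g (y x)).comp Dy) x := by
    have : HasFDerivAt (fun x' => S (x', q x') - ⟪y x', q x'⟫ + g (y x'))
        (DS.comp ((ContinuousLinearMap.id ℝ (E n)).prod Dq)
          - (fderivInnerCLM ℝ (y x, q0)).comp (Dy.prod Dq)
          + (fderiv ℝ g (y x)).comp Dy) x := (h1.sub h2).add h3
    exact this.congr_of_eventuallyEq (by filter_upwards with x' using (hf x'))
  -- partial derivatives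
  have hpart1 : HasFDerivAt (fun x' => S (x', q0))
      (DS.comp (ContinuousLinearMap.inl ℝ (E n) (E m))) x := by
    have hp : HasFDerivAt (fun x' : E n => (x', q0))
        (ContinuousLinearMap.inl ℝ (E n) (E m)) x :=
      HasFDerivAt.prodMk (hasFDerivAt_id x) (hasFDerivAt_const q0 x)
    exact hSdiff.hasFDerivAt.comp x hp
  have hpart2 : HasFDerivAt (fun q' => S (x, q'))
      (DS.comp (ContinuousLinearMap.inr ℝ (E n) (E m))) q0 := by
    have hp : HasFDerivAt (fun q' : E m => (x, q'))
        (ContinuousLinearMap.inr ℝ (E n) (E m)) q0 :=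
      HasFDerivAt.prodMk (hasFDerivAt_const x q0) (hasFDerivAt_id q0)
    exact hSdiff.hasFDerivAt.comp q0 hp
  -- key: the derivative of f equals the partial derivative of S in x
  have hkey : (DS.comp ((ContinuousLinearMap.id ℝ (E n)).prod Dq)
        - (fderivInnerCLM ℝ (y x, q0)).comp (Dy.prod Dq)
        + (fderiv ℝ g (y x)).comp Dy)
      = DS.comp (ContinuousLinearMap.inl ℝ (E n) (E m)) := by
    ext v
    have hDSsplit : DS (v, Dq v) = DS (v, 0) + DS (0, Dq v) := by
      rw [← map_add]; simp
    have hSq : DS (0, Dq v) = ⟪y x, Dq v⟫ := by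
      have := hpart2.fderiv
      have h := fderiv_eq_inner_gradient (fun q' => S (x, q')) q0 (Dq v)
      rw [this] at h
      rw [hfix x]; exact h
    have hgy : fderiv ℝ g (y x) (Dy v) = ⟪q0, Dy v⟫ :=
      fderiv_eq_inner_gradient g (y x) (Dy v)
    simp only [ContinuousLinearMap.add_apply, ContinuousLinearMap.sub_apply,
      ContinuousLinearMap.comp_apply, ContinuousLinearMap.prod_apply,
      ContinuousLinearMap.coe_id', id_eq, ContinuousLinearMap.inl_apply,
      fderivInnerCLM_apply]
    rw [hDSsplit, hSq, hgy, real_inner_comm (Dy v) q0]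
    ring
  rw [hkey] at hfd
  have hgradf : gradient f x = gradient (fun x' => S (x', q0)) x := by
    simp only [gradient, hfd.fderiv, hpart1.fderiv]
  rw [hgradf, hrel x q0, hq0, hq_def, ← hfix x]
end
end

section
/- Let S : ℝⁿ × ℝᵐ → ℝ and g, u : ℝᵐ → ℝ be smooth. Fix x ∈ ℝⁿ and suppose Y : ℝ → ℝᵐ is differentiable at 0 and satisfies, for all t in a neighborhood of 0, the fixed-point equation Y(t) = ∂S/∂q(x, ∇g(Y(t)) + t·∇u(Y(t))). Define Q(t) = ∇g(Y(t)) + t·∇u(Y(t)) and F(t) = S(x, Q(t)) − ⟨Y(t), Q(t)⟩ + g(Y(t)) + t·u(Y(t)) (the generalized pullback of g + t·u evaluated at x). Then F is differentiable at 0 and F′(0) = u(Y(0)). That is, the derivative of the nonlinear pullback map Φ* at the point g in the direction u is the ordinary (linear) pullback u ↦ u ∘ φ_g, where φ_g(x) = Y(0). -/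
open scoped RealInnerProductSpace

noncomputable section

/-- The derivative of the nonlinear pullback `Φ*` at the point `g` in the direction `u`
is the ordinary pullback `u ↦ u ∘ φ_g`: at a fixed `x`, the derivative in `t` at `t = 0` of
the generalized pullback of `g + t·u` evaluated at `x` equals `u (Y 0)`, where `Y`
solves the fixed-point equation. -/
theorem derivative_of_pullback_is_ordinary_pullback
    (n m : ℕ) (S : E n × E m → ℝ) (g u : E m → ℝ)
    (hS : ContDiff ℝ (⊤ : ℕ∞) S) (hg : ContDiff ℝ (⊤ : ℕ∞) g) (hu : ContDiff ℝ (⊤ : ℕ∞) u)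
    (x : E n) (Y : ℝ → E m) (hY : DifferentiableAt ℝ Y 0)
    (hfix : ∀ᶠ t in nhds (0 : ℝ),
      Y t = gradient (fun q => S (x, q)) (gradient g (Y t) + t • gradient u (Y t)))
    (Q : ℝ → E m)
    (hQ : ∀ t, Q t = gradient g (Y t) + t • gradient u (Y t))
    (F : ℝ → ℝ)
    (hF : ∀ t, F t = S (x, Q t) - ⟪Y t, Q t⟫ + g (Y t) + t * u (Y t)) :
    HasDerivAt F (u (Y 0)) 0 := by
  -- notation
  set y0 := Y 0 with hy0
  have hYd : HasDerivAt Y (deriv Y 0) 0 := hY.hasDerivAt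
  set v := deriv Y 0 with hv
  -- gradients of smooth functions are differentiable
  have hgrad : ∀ f : E m → ℝ, ContDiff ℝ (⊤ : ℕ∞) f → Differentiable ℝ (gradient f) := by
    intro f hf
    have h1 : Differentiable ℝ (fderiv ℝ f) := (hf.fderiv_right (m := (⊤ : ℕ∞)) (by simp)).differentiable (by simp)
    have h2 : Differentiable ℝ
        ((InnerProductSpace.toDual ℝ (E m)).symm.toContinuousLinearEquiv :
          StrongDual ℝ (E m) → E m) :=
      ContinuousLinearEquiv.differentiable _
    have : gradient f = fun y => (InnerProductSpace.toDual ℝ (E m)).symm (fderiv ℝ f y) := rfl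
    rw [this]
    exact h2.comp h1
  have hgY : HasDerivAt (fun t => gradient g (Y t))
      (fderiv ℝ (gradient g) y0 v) 0 :=
    ((hgrad g hg y0).hasFDerivAt).comp_hasDerivAt 0 hYd
  have huY : HasDerivAt (fun t => gradient u (Y t))
      (fderiv ℝ (gradient u) y0 v) 0 :=
    ((hgrad u hu y0).hasFDerivAt).comp_hasDerivAt 0 hYd
  -- derivative of Q
  set q' : E m := fderiv ℝ (gradient g) y0 v + gradient u y0 with hq'
  have hQ0 : Q 0 = gradient g y0 := by rw [hQ 0]; simp; rfl
  have hQd : HasDerivAt Q q' 0 := by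
    have hsm := HasDerivAt.smul (hasDerivAt_id (0 : ℝ)) huY
    have := hgY.add hsm
    simp only [id_eq, one_smul, zero_smul, add_zero, zero_add] at this
    have heq : (fun t : ℝ => gradient g (Y t) + t • gradient u (Y t)) = Q :=
      funext fun t => (hQ t).symm
    rw [← heq]
    exact this
  -- fixed point at 0
  have hfix0 : y0 = gradient (fun q => S (x, q)) (Q 0) := by
    have := hfix.self_of_nhds
    rw [hQ 0]; simpa using this
  -- derivative of each part of F
  have hSx : Differentiable ℝ (fun q : E m => S (x, q)) :=
    (hS.differentiable (by simp)).comp (differentiable_const x |>.prodMk differentiable_id)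
  have hA : HasDerivAt (fun t => S (x, Q t)) (⟪y0, q'⟫) 0 := by
    have h1 : HasGradientAt (fun q : E m => S (x, q))
        (gradient (fun q => S (x, q)) (Q 0)) (Q 0) :=
      (hSx (Q 0)).hasGradientAt
    have h2 := h1.hasFDerivAt.comp_hasDerivAt 0 hQd
    rw [← hfix0] at h2
    simpa [InnerProductSpace.toDual_apply_apply, Function.comp_def] using h2
  have hB : HasDerivAt (fun t => ⟪Y t, Q t⟫) (⟪y0, q'⟫ + ⟪v, Q 0⟫) 0 :=
    hYd.inner ℝ hQd
  have hC : HasDerivAt (fun t => g (Y t)) (⟪gradient g y0, v⟫) 0 := by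
    have h1 : HasGradientAt g (gradient g y0) y0 := (hg.differentiable (by simp) y0).hasGradientAt
    simpa [InnerProductSpace.toDual_apply_apply, Function.comp_def] using h1.hasFDerivAt.comp_hasDerivAt 0 hYd
  have hD : HasDerivAt (fun t : ℝ => t * u (Y t)) (u y0) 0 := by
    have huY' : HasDerivAt (fun t => u (Y t))
        (fderiv ℝ u y0 v) 0 :=
      ((hu.differentiable (by simp) y0).hasFDerivAt).comp_hasDerivAt 0 hYd
    have := HasDerivAt.mul (hasDerivAt_id (0 : ℝ)) huY'
    simpa [Pi.mul_def] using this
  have htotal := ((hA.sub hB).add hC).add hD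
  have hFfun : (fun t => S (x, Q t) - ⟪Y t, Q t⟫ + g (Y t) + t * u (Y t)) = F :=
    funext fun t => (hF t).symm
  rw [← hFfun]
  have : ⟪y0, q'⟫ - (⟪y0, q'⟫ + ⟪v, Q 0⟫) + ⟪gradient g y0, v⟫ + u y0 = u y0 := by
    rw [hQ0, real_inner_comm v (gradient g y0)]; ring
  rwa [this] at htotal
end
end

section
/- Let S : ℝⁿ × ℝᵐ → ℝ and h : ℝᵐ → ℝ be smooth. Fix x ∈ ℝⁿ and suppose Y : ℝ → ℝᵐ is twice differentiable at 0 and satisfies Y(t) = ∂S/∂q(x, t·∇h(Y(t))) for all t in a neighborhood of 0; in particular Y(0) = ∂S/∂q(x, 0) =: φ(x). Define F(t) = S(x, t·∇h(Y(t))) − t·⟨Y(t), ∇h(Y(t))⟩ + t·h(Y(t)) (the generalized pullback of t·h evaluated at x). Then F(0) = S(x, 0), F′(0) = h(φ(x)), and F″(0) = ∂²S/∂q²(x, 0)[∇h(φ(x)), ∇h(φ(x))], where ∂²S/∂q²(x, 0) denotes the second derivative (Hessian bilinear form) of the map q ↦ S(x, q) at q = 0. In other words, the quadratic approximation of the nonlinear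 pullback is Φ*[t·h] = S₀ + t·(h∘φ) + (t²/2)·Sᶦʲ (∂ⱼh∘φ)(∂ᵢh∘φ) modulo t³, where S₀(x) = S(x,0) and Sᶦʲ(x) are the second-order coefficients of S in q. -/
open scoped RealInnerProductSpace

noncomputable section

lemma inner_gradient_apply {k : ℕ} (f : E k → ℝ) (z v : E k) :
    ⟪gradient f z, v⟫ = fderiv ℝ f z v := by
  simpa [gradient] using
    (InnerProductSpace.toDual_symm_apply (𝕜 := ℝ) (E := E k)
      (x := v) (y := fderiv ℝ f z))

/-- Quadratic approximation of the nonlinear pullback near `g = 0`: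
`Φ*[t·h](x) = S(x,0) + t·h(φ(x)) + (t²/2)·∂²S/∂q²(x,0)[∇h(φ(x)), ∇h(φ(x))] mod t³`,
where `φ(x) = ∂S/∂q(x,0)`. -/
theorem quadratic_approximation_of_pullback
    (n m : ℕ) (S : E n × E m → ℝ) (h : E m → ℝ)
    (hS : ContDiff ℝ (⊤ : ℕ∞) S) (hh : ContDiff ℝ (⊤ : ℕ∞) h)
    (x : E n) (Y : ℝ → E m)
    (hY1 : ∀ᶠ t in nhds (0 : ℝ), DifferentiableAt ℝ Y t)
    (hY2 : DifferentiableAt ℝ (deriv Y) 0)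
    (hfix : ∀ᶠ t in nhds (0 : ℝ),
      Y t = gradient (fun q => S (x, q)) (t • gradient h (Y t)))
    (F : ℝ → ℝ)
    (hF : ∀ t, F t = S (x, t • gradient h (Y t))
        - t * ⟪Y t, gradient h (Y t)⟫ + t * h (Y t)) :
    F 0 = S (x, 0) ∧
    deriv F 0 = h (gradient (fun q => S (x, q)) 0) ∧
    deriv (deriv F) 0 =
      iteratedFDeriv ℝ 2 (fun q => S (x, q)) 0
        ![gradient h (gradient (fun q => S (x, q)) 0),
          gradient h (gradient (fun q => S (x, q)) 0)] := by
  set G : E m → ℝ := fun q => S (x, q) with hGdef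
  have hG : ContDiff ℝ (⊤ : ℕ∞) G := hS.comp (contDiff_const.prodMk contDiff_id)
  -- gradients are smooth
  have hgradh : ContDiff ℝ (⊤ : ℕ∞) (fun y => gradient h y) :=
    (InnerProductSpace.toDual ℝ (E m)).symm.contDiff.comp (hh.fderiv_right (by simp))
  have hgradG : ContDiff ℝ (⊤ : ℕ∞) (fun z => gradient G z) :=
    (InnerProductSpace.toDual ℝ (E m)).symm.contDiff.comp (hG.fderiv_right (by simp))
  set g : ℝ → E m := fun t => gradient h (Y t) with hgdef
  -- F' t = h (Y t) near 0
  have key : ∀ᶠ t in nhds (0 : ℝ), HasDerivAt F (h (Y t)) t := by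
    filter_upwards [hY1, hfix] with t hYd hfixt
    have hY' : HasDerivAt Y (deriv Y t) t := hYd.hasDerivAt
    have hgd : HasDerivAt g (fderiv ℝ (fun y => gradient h y) (Y t) (deriv Y t)) t :=
      ((hgradh.differentiable (by simp) (Y t)).hasFDerivAt).comp_hasDerivAt t hY'
    set Dg := fderiv ℝ (fun y => gradient h y) (Y t) (deriv Y t)
    have hq : HasDerivAt (fun s => s • g s) (t • Dg + (1 : ℝ) • g t) t :=
      (hasDerivAt_id t).smul hgd
    have hA : HasDerivAt (fun s => G (s • g s))
        (fderiv ℝ G (t • g t) (t • Dg + (1 : ℝ) • g t)) t :=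
      by have := ((hG.differentiable (by simp) (t • g t)).hasFDerivAt).comp_hasDerivAt t hq
         exact this
    have hB : HasDerivAt (fun s => ⟪Y s, g s⟫)
        (⟪Y t, Dg⟫ + ⟪deriv Y t, g t⟫) t := hY'.inner ℝ hgd
    have hC : HasDerivAt (fun s => h (Y s)) (fderiv ℝ h (Y t) (deriv Y t)) t :=
      ((hh.differentiable (by simp) (Y t)).hasFDerivAt).comp_hasDerivAt t hY'
    have hFfun : F = fun s => G (s • g s) - s * ⟪Y s, g s⟫ + s * h (Y s) :=
      funext fun s => hF s
    have hFd : HasDerivAt F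
        ((fderiv ℝ G (t • g t) (t • Dg + (1 : ℝ) • g t))
          - ((1 : ℝ) * ⟪Y t, g t⟫ + t * (⟪Y t, Dg⟫ + ⟪deriv Y t, g t⟫))
          + ((1 : ℝ) * h (Y t) + t * fderiv ℝ h (Y t) (deriv Y t))) t := by
      rw [hFfun]
      exact (hA.sub ((hasDerivAt_id t).mul hB)).add ((hasDerivAt_id t).mul hC)
    have e1 : fderiv ℝ G (t • g t) (t • Dg + (1 : ℝ) • g t)
        = t * ⟪Y t, Dg⟫ + ⟪Y t, g t⟫ := by
      rw [← inner_gradient_apply G (t • g t) _, ← hfixt, inner_add_right,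
        real_inner_smul_right, real_inner_smul_right]
      ring
    have e2 : fderiv ℝ h (Y t) (deriv Y t) = ⟪g t, deriv Y t⟫ :=
      (inner_gradient_apply h (Y t) (deriv Y t)).symm
    have e3 : ⟪deriv Y t, g t⟫ = ⟪g t, deriv Y t⟫ := real_inner_comm _ _
    have : (fderiv ℝ G (t • g t) (t • Dg + (1 : ℝ) • g t))
          - ((1 : ℝ) * ⟪Y t, g t⟫ + t * (⟪Y t, Dg⟫ + ⟪deriv Y t, g t⟫))
          + ((1 : ℝ) * h (Y t) + t * fderiv ℝ h (Y t) (deriv Y t)) = h (Y t) := by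
      rw [e1, e2, e3]; ring
    exact this ▸ hFd
  have hY0 : Y 0 = gradient G 0 := by
    have := hfix.self_of_nhds
    simpa using this
  refine ⟨by simpa using hF 0, ?_, ?_⟩
  · have := key.self_of_nhds
    rw [this.deriv, hY0]
  · -- second derivative
    have hderivF : deriv F =ᶠ[nhds (0 : ℝ)] fun t => h (Y t) := by
      filter_upwards [key] with t ht using ht.deriv
    rw [hderivF.deriv_eq]
    have hYd0 : DifferentiableAt ℝ Y 0 := hY1.self_of_nhds
    have hY' : HasDerivAt Y (deriv Y 0) 0 := hYd0.hasDerivAt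
    have hgd : HasDerivAt g (fderiv ℝ (fun y => gradient h y) (Y 0) (deriv Y 0)) 0 :=
      ((hgradh.differentiable (by simp) (Y 0)).hasFDerivAt).comp_hasDerivAt 0 hY'
    have hq : HasDerivAt (fun s => s • g s) (g 0) 0 := by
      have := (hasDerivAt_id' (0 : ℝ)).smul hgd
      rw [zero_smul, zero_add, one_smul] at this; exact this
    have hC : HasDerivAt (fun t => h (Y t)) (fderiv ℝ h (Y 0) (deriv Y 0)) 0 :=
      ((hh.differentiable (by simp) (Y 0)).hasFDerivAt).comp_hasDerivAt 0 hY'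
    rw [hC.deriv]
    set v : E m := g 0 with hvdef
    have hfd2 : DifferentiableAt ℝ (fderiv ℝ G) 0 :=
      ((hG.fderiv_right (m := (⊤ : ℕ∞)) (by simp)).differentiable (by simp)).differentiableAt
    have h0 : ((0 : ℝ) • g 0 : E m) = 0 := zero_smul _ _
    have happly : HasFDerivAt (fun z => fderiv ℝ G z v)
        ((ContinuousLinearMap.apply ℝ ℝ v).comp (fderiv ℝ (fderiv ℝ G) 0))
        ((0 : ℝ) • g 0) := by
      rw [h0]
      exact ((ContinuousLinearMap.apply ℝ ℝ v).hasFDerivAt).comp 0 hfd2.hasFDerivAt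
    have hR : HasDerivAt (fun s => fderiv ℝ G (s • g s) v)
        (fderiv ℝ (fderiv ℝ G) 0 (g 0) v) 0 :=
      by have := happly.comp_hasDerivAt 0 hq
         exact this
    have heq : (fun s => fderiv ℝ G (s • g s) v) =ᶠ[nhds (0 : ℝ)]
        (fun s => ⟪Y s, v⟫) := by
      filter_upwards [hfix] with s hs
      rw [hs]
      exact (inner_gradient_apply G _ v).symm
    have hLder : HasDerivAt (fun s => ⟪Y s, v⟫)
        (fderiv ℝ (fderiv ℝ G) 0 (g 0) v) 0 :=
      hR.congr_of_eventuallyEq heq.symm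
    have hL : HasDerivAt (fun s => ⟪Y s, v⟫) (⟪deriv Y 0, v⟫) 0 := by
      simpa using hY'.inner ℝ (hasDerivAt_const (0 : ℝ) v)
    have hinner : ⟪deriv Y 0, v⟫ = fderiv ℝ (fderiv ℝ G) 0 (g 0) v :=
      hL.unique hLder
    have hw : g 0 = gradient h (gradient G 0) := by rw [hgdef]; simp [hY0]
    have hfh : fderiv ℝ h (Y 0) (deriv Y 0) = ⟪g 0, deriv Y 0⟫ :=
      (inner_gradient_apply h (Y 0) (deriv Y 0)).symm
    rw [hfh, real_inner_comm, ← hvdef, hinner, iteratedFDeriv_two_apply, ← hw]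
    simp; rfl
end
end

section
/- Let H, F : ℝⁿ × ℝⁿ → ℝ be C¹ and f : ℝⁿ → ℝ be C². Define X_H[f] : ℝⁿ → ℝ by X_H[f](x) = H(x, ∇f(x)), similarly X_F[f], and define the canonical Poisson bracket (H, F)(x, p) = ⟨∂H/∂p(x, p), ∂F/∂x(x, p)⟩ − ⟨∂H/∂x(x, p), ∂F/∂p(x, p)⟩. Then for every x ∈ ℝⁿ: ⟨∂F/∂p(x, ∇f(x)), ∇(X_H[f])(x)⟩ − ⟨∂H/∂p(x, ∇f(x)), ∇(X_F[f])(x)⟩ = −(H, F)(x, ∇f(x)). -/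
/-!
Write `p = ∇f(x)`, `A = ∂H/∂p(x, p)` and `B = ∂F/∂p(x, p)`. By the chain rule,
`⟪B, ∇(X_H[f])(x)⟫ = ⟪∂H/∂x(x, p), B⟫ + ⟪A, D²f(x) B⟫`, and symmetrically for `F`.
The two second-order terms `⟪A, D²f(x) B⟫` and `⟪B, D²f(x) A⟫` agree because the Hessian of a
`C²` function is symmetric, so only the first-order terms survive, and these form `-(H, F)`.
-/

open scoped RealInnerProductSpace

noncomputable section

open InnerProductSpace

section PartialDerivatives

variable {𝕜 : Type*} [NontriviallyNormedField 𝕜]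
  {U V W : Type*} [NormedAddCommGroup U] [NormedSpace 𝕜 U] [NormedAddCommGroup V]
  [NormedSpace 𝕜 V] [NormedAddCommGroup W] [NormedSpace 𝕜 W]
  {G : U × V → W} {x : U} {p : V}

theorem DifferentiableAt.fderiv_comp_prodMk_left_apply (hG : DifferentiableAt 𝕜 G (x, p))
    (v : U) : fderiv 𝕜 (fun x' => G (x', p)) x v = fderiv 𝕜 G (x, p) (v, 0) :=
  DFunLike.congr_fun (hG.hasFDerivAt.comp x (hasFDerivAt_prodMk_left (𝕜 := 𝕜) x p)).fderiv v

theorem DifferentiableAt.fderiv_comp_prodMk_right_apply (hG : DifferentiableAt 𝕜 G (x, p))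
    (w : V) : fderiv 𝕜 (fun p' => G (x, p')) p w = fderiv 𝕜 G (x, p) (0, w) :=
  DFunLike.congr_fun (hG.hasFDerivAt.comp p (hasFDerivAt_prodMk_right x p)).fderiv w

theorem DifferentiableAt.fderiv_comp_prodMk_apply {g : U → V}
    (hG : DifferentiableAt 𝕜 G (x, g x)) (hg : DifferentiableAt 𝕜 g x) (v : U) :
    fderiv 𝕜 (fun x' => G (x', g x')) x v
      = fderiv 𝕜 G (x, g x) (v, 0) + fderiv 𝕜 G (x, g x) (0, fderiv 𝕜 g x v) := by
  rw [← map_add, Prod.mk_add_mk, add_zero, zero_add]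
  exact DFunLike.congr_fun
    (hG.hasFDerivAt.comp x ((hasFDerivAt_id x).prodMk hg.hasFDerivAt)).fderiv v

end PartialDerivatives

section Gradient

variable {V : Type*} [NormedAddCommGroup V] [InnerProductSpace ℝ V] [CompleteSpace V]

theorem inner_gradient_comp_prodMk {G : V × V → ℝ} {g : V → V} {x : V}
    (hG : DifferentiableAt ℝ G (x, g x)) (hg : DifferentiableAt ℝ g x) (w : V) :
    ⟪w, gradient (fun x' => G (x', g x')) x⟫
      = ⟪gradient (fun x' => G (x', g x)) x, w⟫
        + ⟪gradient (fun p => G (x, p)) (g x), fderiv ℝ g x w⟫ := by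
  rw [real_inner_comm, inner_gradient_left, inner_gradient_left, inner_gradient_left,
    hG.fderiv_comp_prodMk_apply hg, hG.fderiv_comp_prodMk_left_apply,
    hG.fderiv_comp_prodMk_right_apply]

theorem inner_fderiv_gradient_apply (f : V → ℝ) (x u v : V) :
    ⟪fderiv ℝ (gradient f) x u, v⟫ = fderiv ℝ (fderiv ℝ f) x u v := by
  have hgrad : gradient f = (toDual ℝ V).symm ∘ fderiv ℝ f := rfl
  rw [hgrad, LinearIsometryEquiv.comp_fderiv]
  exact toDual_symm_apply

variable {f : V → ℝ} {x : V}

theorem ContDiffAt.differentiableAt_gradient (hf : ContDiffAt ℝ 2 f x) :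
    DifferentiableAt ℝ (gradient f) x :=
  (toDual ℝ V).symm.differentiableAt.comp x
    ((hf.fderiv_right (m := 1) le_rfl).differentiableAt one_ne_zero)

theorem ContDiffAt.isSymmetric_fderiv_gradient (hf : ContDiffAt ℝ 2 f x) :
    (fderiv ℝ (gradient f) x : V →ₗ[ℝ] V).IsSymmetric := by
  intro u v
  rw [ContinuousLinearMap.coe_coe, inner_fderiv_gradient_apply, real_inner_comm,
    inner_fderiv_gradient_apply, hf.isSymmSndFDerivAt (by simp)]

end Gradient

/-- Pointwise finite-dimensional content of `[𝑿_H, 𝑿_F] = −𝑿_{(H,F)}` for the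
Hamilton–Jacobi vector fields `X_H[f](x) = H(x, ∇f(x))` on the space of functions,
where `(H,F)` is the canonical Poisson bracket on `T*ℝⁿ`. -/
theorem commutator_of_hamilton_jacobi_fields
    (n : ℕ) (H F : E n × E n → ℝ) (f : E n → ℝ)
    (hH : ContDiff ℝ 1 H) (hF : ContDiff ℝ 1 F) (hf : ContDiff ℝ 2 f) :
    ∀ x : E n,
      ⟪gradient (fun p => F (x, p)) (gradient f x),
          gradient (fun x' => H (x', gradient f x')) x⟫
        - ⟪gradient (fun p => H (x, p)) (gradient f x),
            gradient (fun x' => F (x', gradient f x')) x⟫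
      = -(⟪gradient (fun p => H (x, p)) (gradient f x),
              gradient (fun x' => F (x', gradient f x)) x⟫
          - ⟪gradient (fun x' => H (x', gradient f x)) x,
              gradient (fun p => F (x, p)) (gradient f x)⟫) := by
  intro x
  have hgrad := hf.contDiffAt.differentiableAt_gradient (x := x)
  rw [inner_gradient_comp_prodMk (hH.differentiable one_ne_zero _) hgrad,
    inner_gradient_comp_prodMk (hF.differentiable one_ne_zero _) hgrad]
  set A := gradient (fun p => H (x, p)) (gradient f x)
  set B := gradient (fun p => F (x, p)) (gradient f x)
  have hessian_symm : ⟪fderiv ℝ (gradient f) x B, A⟫ = ⟪B, fderiv ℝ (gradient f) x A⟫ :=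
    hf.contDiffAt.isSymmetric_fderiv_gradient B A
  linear_combination hessian_symm - real_inner_comm A (fderiv ℝ (gradient f) x B)
    - real_inner_comm A (gradient (fun x' => F (x', gradient f x)) x)
end
end

section
/- Let A : ℝⁿ → ℝⁿ and C, G : ℝᵐ → ℝᵐ be symmetric linear maps, let B : ℝⁿ → ℝᵐ be a linear map with adjoint Bᵀ, and suppose id − G∘C : ℝᵐ → ℝᵐ is invertible. Then: (i) the linear map P := A + Bᵀ∘(id − G∘C)⁻¹∘G∘B : ℝⁿ → ℝⁿ is symmetric; (ii) the composed relation Λ = {(x, p) ∈ ℝⁿ × ℝⁿ : ∃ y ∈ ℝᵐ, ∃ q ∈ ℝᵐ, p = A x + Bᵀ q ∧ q = G y ∧ y = B x + C q} equals the graph {(x, P x) : x ∈ ℝⁿ}; consequently Λ equals its own orthogonal complement with respect to the canonical symplectic form ω((x, p), (x′, p′)) = ⟨p, x′⟩ − ⟨p′, x⟩ on ℝⁿ × ℝⁿ, i.e., Λ is a Lagrangian subspace. -/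
open scoped RealInnerProductSpace

noncomputable section

/-- Linear model of Theorem-Definition 1: composing the canonical relation with quadratic
generating function (`p = Ax + Bᵀq`, `y = Bx + Cq`) with the graph of `y ↦ Gy` yields the
graph of the symmetric map `P = A + Bᵀ(id − GC)⁻¹GB`, which is a Lagrangian subspace. -/
theorem composed_linear_relation_is_graph
    (n m : ℕ) (A : E n →ₗ[ℝ] E n) (C G : E m →ₗ[ℝ] E m) (B : E n →ₗ[ℝ] E m)
    (hA : ∀ v w : E n, ⟪A v, w⟫ = ⟪v, A w⟫)
    (hC : ∀ v w : E m, ⟪C v, w⟫ = ⟪v, C w⟫)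
    (hG : ∀ v w : E m, ⟪G v, w⟫ = ⟪v, G w⟫)
    (K : E m →ₗ[ℝ] E m)
    (hK1 : K ∘ₗ (LinearMap.id - G ∘ₗ C) = LinearMap.id)
    (hK2 : (LinearMap.id - G ∘ₗ C) ∘ₗ K = LinearMap.id)
    (P : E n →ₗ[ℝ] E n)
    (hP : P = A + LinearMap.adjoint B ∘ₗ K ∘ₗ G ∘ₗ B)
    (Λ : Set (E n × E n))
    (hΛ : Λ = {xp | ∃ (y : E m) (q : E m),
      xp.2 = A xp.1 + LinearMap.adjoint B q ∧ q = G y ∧ y = B xp.1 + C q}) :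
    (∀ v w : E n, ⟪P v, w⟫ = ⟪v, P w⟫) ∧
    Λ = {xp : E n × E n | xp.2 = P xp.1} ∧
    {v : E n × E n | ∀ w ∈ Λ, ⟪v.2, w.1⟫ - ⟪w.2, v.1⟫ = 0} = Λ := by
  -- pointwise versions of the inverse identities
  have hK1' : ∀ x : E m, K (x - G (C x)) = x := by
    intro x
    have := LinearMap.ext_iff.mp hK1 x
    simpa using this
  have hK2' : ∀ x : E m, K x - G (C (K x)) = x := by
    intro x
    have := LinearMap.ext_iff.mp hK2 x
    simpa using this
  -- symmetry of S = K ∘ G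
  have key : ∀ v w : E m, ⟪K (G v), w⟫ = ⟪v, K (G w)⟫ := by
    intro v w
    set a := K (G v) with ha_def
    set b := K (G w) with hb_def
    have ha : a - G (C a) = G v := hK2' (G v)
    have hb : b - G (C b) = G w := hK2' (G w)
    have ha' : a = G v + G (C a) := by
      rw [← ha]; abel
    have hb' : b = G w + G (C b) := by
      rw [← hb]; abel
    have e1 : ⟪a, w⟫ = ⟪v, G w⟫ + ⟪C a, G w⟫ := by
      conv_lhs => rw [ha']
      rw [inner_add_left, hG v w, hG (C a) w]
    have e2 : ⟪C a, G w⟫ = ⟪C a, b⟫ - ⟪C a, G (C b)⟫ := by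
      rw [← hb, inner_sub_right]
    have e3 : ⟪v, b⟫ = ⟪v, G w⟫ + ⟪G v, C b⟫ := by
      conv_lhs => rw [hb']
      rw [inner_add_right, ← hG v (C b)]
    have e4 : ⟪G v, C b⟫ = ⟪a, C b⟫ - ⟪G (C a), C b⟫ := by
      rw [← ha, inner_sub_left]
    have h5 : ⟪C a, b⟫ = ⟪a, C b⟫ := hC a b
    have h6 : ⟪C a, G (C b)⟫ = ⟪G (C a), C b⟫ := (hG (C a) (C b)).symm
    rw [e1, e2, e3, e4]
    linarith
  -- symmetry of P
  have hPsym : ∀ v w : E n, ⟪P v, w⟫ = ⟪v, P w⟫ := by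
    intro v w
    rw [hP]
    simp only [LinearMap.add_apply, LinearMap.comp_apply, inner_add_left, inner_add_right]
    rw [hA v w, LinearMap.adjoint_inner_left, LinearMap.adjoint_inner_right, key (B v) (B w)]
  -- graph equality
  have hgraph : Λ = {xp : E n × E n | xp.2 = P xp.1} := by
    rw [hΛ]
    ext ⟨x, p⟩
    simp only [Set.mem_setOf_eq]
    constructor
    · rintro ⟨y, q, hp, hq, hy⟩
      have hq' : q = K (G (B x)) := by
        have hq2 : q = G (B x) + G (C q) := by
          conv_lhs => rw [hq, hy]
          exact map_add G _ _
        have h1 : q - G (C q) = G (B x) := sub_eq_of_eq_add hq2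
        have := hK1' q
        rw [h1] at this
        exact this.symm
      rw [hp, hq', hP]
      simp [LinearMap.comp_apply]
    · intro hpx
      refine ⟨B x + C (K (G (B x))), K (G (B x)), ?_, ?_, rfl⟩
      · rw [hpx, hP]; simp [LinearMap.comp_apply]
      · rw [map_add]
        exact sub_eq_iff_eq_add.mp (hK2' (G (B x)))
  refine ⟨hPsym, hgraph, ?_⟩
  rw [hgraph]
  ext ⟨x, p⟩
  simp only [Set.mem_setOf_eq]
  constructor
  · intro h
    have h' : ∀ x' : E n, ⟪p - P x, x'⟫ = 0 := by
      intro x'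
      have := h (x', P x') rfl
      simp only at this
      have hsym : ⟪P x', x⟫ = ⟪P x, x'⟫ := by
        rw [hPsym x' x, real_inner_comm]
      rw [inner_sub_left]
      linarith [this, hsym]
    have : p - P x = 0 := by
      have := h' (p - P x)
      rwa [inner_self_eq_zero] at this
    exact sub_eq_zero.mp this
  · rintro hpx ⟨x', p'⟩ hw
    simp only [Set.mem_setOf_eq] at hw
    simp only [hpx, hw]
    rw [hPsym x x', real_inner_comm x (P x')]
    ring
end
end

section
/- Let S : ℝⁿ × ℝᵐ → ℝ, ξ : ℝⁿ → ℝⁿ, and ψ : ℝᵐ → ℝᵐ be smooth, and suppose differentiable maps Y′, Q : ℝⁿ × ℝᵐ → ℝᵐ satisfy, for all (x′, q′): (a) ψ(Y′(x′, q′)) = ∂S/∂q(ξ(x′), Q(x′, q′)) and (b) q′ = (Dψ(Y′(x′, q′)))ᵀ Q(x′, q′), where Dψ denotes the Jacobian (Fréchet derivative) of ψ. Define S′ : ℝⁿ × ℝᵐ → ℝ by S′(x′, q′) = S(ξ(x′), Q(x′, q′)) − ⟨ψ(Y′(x′, q′)), Q(x′, q′)⟩ + ⟨Y′(x′, q′),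 q′⟩. Then for all (x′, q′): ∂S′/∂q′(x′, q′) = Y′(x′, q′) and ∂S′/∂x′(x′, q′) = (Dξ(x′))ᵀ · ∂S/∂x(ξ(x′), Q(x′, q′)). -/
open scoped RealInnerProductSpace

noncomputable section

/-- Transformation law of the generating function of a canonical relation under changes
of coordinates `x = ξ(x′)`, `y = ψ(y′)` (momenta transforming contragradiently):
`S′(x′,q′) = S(x,q) − ⟨y,q⟩ + ⟨y′,q′⟩` satisfies `∂S′/∂q′ = y′` and
`∂S′/∂x′ = (Dξ)ᵀ ∂S/∂x`. -/
theorem generating_function_transformation_law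
    (n m : ℕ) (S : E n × E m → ℝ) (ξ : E n → E n) (ψ : E m → E m)
    (hS : ContDiff ℝ (⊤ : ℕ∞) S) (hξ : ContDiff ℝ (⊤ : ℕ∞) ξ) (hψ : ContDiff ℝ (⊤ : ℕ∞) ψ)
    (Y' Q : E n × E m → E m)
    (hY' : Differentiable ℝ Y') (hQ : Differentiable ℝ Q)
    (ha : ∀ (x' : E n) (q' : E m),
      ψ (Y' (x', q')) = gradient (fun q => S (ξ x', q)) (Q (x', q')))
    (hb : ∀ (x' : E n) (q' : E m),
      q' = ContinuousLinearMap.adjoint (fderiv ℝ ψ (Y' (x', q'))) (Q (x', q')))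
    (S' : E n × E m → ℝ)
    (hS' : ∀ (x' : E n) (q' : E m), S' (x', q') = S (ξ x', Q (x', q'))
        - ⟪ψ (Y' (x', q')), Q (x', q')⟫ + ⟪Y' (x', q'), q'⟫) :
    ∀ (x' : E n) (q' : E m),
      gradient (fun q'' => S' (x', q'')) q' = Y' (x', q') ∧
      gradient (fun x'' => S' (x'', q')) x' =
        ContinuousLinearMap.adjoint (fderiv ℝ ξ x')
          (gradient (fun x => S (x, Q (x', q'))) (ξ x')) := by
  intro x' q'
  have hSd : Differentiable ℝ S := hS.differentiable (by simp)
  have hψd : Differentiable ℝ ψ := hψ.differentiable (by simp)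
  have hξd : Differentiable ℝ ξ := hξ.differentiable (by simp)
  set Qp := Q (x', q') with hQp
  set Yp := Y' (x', q') with hYp
  set DS := fderiv ℝ S (ξ x', Qp) with hDS
  set DQ := fderiv ℝ Q (x', q') with hDQ
  set DY := fderiv ℝ Y' (x', q') with hDY
  set Dψ := fderiv ℝ ψ Yp with hDψ
  set Dξ := fderiv ℝ ξ x' with hDξ
  -- key fact 1: action of DS on vertical vectors
  have fact1 : ∀ w : E m, DS (0, w) = ⟪ψ Yp, w⟫ := by
    intro w
    have hj : HasFDerivAt (fun q : E m => ((ξ x' : E n), q))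
        ((0 : E m →L[ℝ] E n).prod (ContinuousLinearMap.id ℝ (E m))) Qp :=
      HasFDerivAt.prodMk (hasFDerivAt_const (ξ x') Qp) (hasFDerivAt_id Qp)
    have hpart : HasFDerivAt (fun q : E m => S (ξ x', q))
        (DS.comp ((0 : E m →L[ℝ] E n).prod (ContinuousLinearMap.id ℝ (E m)))) Qp :=
      (hSd (ξ x', Qp)).hasFDerivAt.comp Qp hj
    have h1 : ⟪ψ Yp, w⟫ = fderiv ℝ (fun q : E m => S (ξ x', q)) Qp w := by
      rw [ha x' q']
      simp only [gradient, ← hQp]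
      exact InnerProductSpace.toDual_symm_apply
    rw [h1, hpart.fderiv]
    simp
  -- key fact 1x: action of DS on horizontal vectors
  have fact1x : ∀ u : E n,
      DS (u, 0) = ⟪gradient (fun x => S (x, Qp)) (ξ x'), u⟫ := by
    intro u
    have hj : HasFDerivAt (fun x : E n => ((x : E n), Qp))
        ((ContinuousLinearMap.id ℝ (E n)).prod (0 : E n →L[ℝ] E m)) (ξ x') :=
      HasFDerivAt.prodMk (hasFDerivAt_id (ξ x')) (hasFDerivAt_const Qp (ξ x'))
    have hpart : HasFDerivAt (fun x : E n => S (x, Qp))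
        (DS.comp ((ContinuousLinearMap.id ℝ (E n)).prod (0 : E n →L[ℝ] E m))) (ξ x') :=
      (hSd (ξ x', Qp)).hasFDerivAt.comp (ξ x') hj
    have h1 : ⟪gradient (fun x => S (x, Qp)) (ξ x'), u⟫
        = fderiv ℝ (fun x : E n => S (x, Qp)) (ξ x') u := by
      simp only [gradient]
      exact InnerProductSpace.toDual_symm_apply
    rw [h1, hpart.fderiv]
    simp
  -- key fact 2: from (b)
  have fact2 : ∀ v : E m, ⟪v, q'⟫ = ⟪Dψ v, Qp⟫ := by
    intro v
    rw [hb x' q', ← hQp, ← hYp, ← hDψ]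
    exact ContinuousLinearMap.adjoint_inner_right Dψ v Qp
  -- splitting of DS
  have hsplit : ∀ (a : E n) (b : E m), DS (a, b) = DS (a, 0) + DS (0, b) := by
    intro a b
    rw [← map_add]
    congr 1
    simp
  constructor
  · -- q-gradient
    have hj : HasFDerivAt (fun q : E m => ((x' : E n), q))
        ((0 : E m →L[ℝ] E n).prod (ContinuousLinearMap.id ℝ (E m))) q' :=
      HasFDerivAt.prodMk (hasFDerivAt_const x' q') (hasFDerivAt_id q')
    set J := (0 : E m →L[ℝ] E n).prod (ContinuousLinearMap.id ℝ (E m)) with hJ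
    have hQq : HasFDerivAt (fun q : E m => Q (x', q)) (DQ.comp J) q' :=
      (hQ (x', q')).hasFDerivAt.comp q' hj
    have hYq : HasFDerivAt (fun q : E m => Y' (x', q)) (DY.comp J) q' :=
      (hY' (x', q')).hasFDerivAt.comp q' hj
    have hψY : HasFDerivAt (fun q : E m => ψ (Y' (x', q))) (Dψ.comp (DY.comp J)) q' :=
      (hψd Yp).hasFDerivAt.comp q' hYq
    have hSq : HasFDerivAt (fun q : E m => S (ξ x', Q (x', q)))
        (DS.comp ((0 : E m →L[ℝ] E n).prod (DQ.comp J))) q' :=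
      (hSd (ξ x', Qp)).hasFDerivAt.comp q'
        (HasFDerivAt.prodMk (hasFDerivAt_const (ξ x') q') hQq)
    have hI1 : HasFDerivAt (fun q : E m => ⟪ψ (Y' (x', q)), Q (x', q)⟫)
        ((fderivInnerCLM ℝ (ψ Yp, Qp)).comp ((Dψ.comp (DY.comp J)).prod (DQ.comp J))) q' :=
      HasFDerivAt.inner ℝ hψY hQq
    have hI2 : HasFDerivAt (fun q : E m => ⟪Y' (x', q), q⟫)
        ((fderivInnerCLM ℝ (Yp, q')).comp
          ((DY.comp J).prod (ContinuousLinearMap.id ℝ (E m)))) q' :=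
      HasFDerivAt.inner ℝ hYq (hasFDerivAt_id q')
    have hg : HasFDerivAt (fun q : E m => S (ξ x', Q (x', q))
          - ⟪ψ (Y' (x', q)), Q (x', q)⟫ + ⟪Y' (x', q), q⟫)
        ((DS.comp ((0 : E m →L[ℝ] E n).prod (DQ.comp J)))
          - ((fderivInnerCLM ℝ (ψ Yp, Qp)).comp
              ((Dψ.comp (DY.comp J)).prod (DQ.comp J)))
          + ((fderivInnerCLM ℝ (Yp, q')).comp
              ((DY.comp J).prod (ContinuousLinearMap.id ℝ (E m))))) q' :=
      (hSq.sub hI1).add hI2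
    have hfun : (fun q'' => S' (x', q'')) = fun q : E m => S (ξ x', Q (x', q))
        - ⟪ψ (Y' (x', q)), Q (x', q)⟫ + ⟪Y' (x', q), q⟫ :=
      funext fun q => hS' x' q
    rw [hfun]
    have hgrad : HasGradientAt (fun q : E m => S (ξ x', Q (x', q))
        - ⟪ψ (Y' (x', q)), Q (x', q)⟫ + ⟪Y' (x', q), q⟫) Yp q' := by
      rw [hasGradientAt_iff_hasFDerivAt]
      refine HasFDerivAt.congr_fderiv hg ?_
      apply ContinuousLinearMap.ext
      intro v
      simp only [InnerProductSpace.toDual_apply_apply, ContinuousLinearMap.add_apply,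
        ContinuousLinearMap.sub_apply, ContinuousLinearMap.comp_apply,
        ContinuousLinearMap.prod_apply, ContinuousLinearMap.zero_apply,
        ContinuousLinearMap.id_apply, fderivInnerCLM_apply, hJ]
      rw [fact1 (DQ (0, v)), fact2 (DY (0, v))]
      ring
    exact hgrad.gradient
  · -- x-gradient
    have hi : HasFDerivAt (fun x : E n => ((x : E n), q'))
        ((ContinuousLinearMap.id ℝ (E n)).prod (0 : E n →L[ℝ] E m)) x' :=
      HasFDerivAt.prodMk (hasFDerivAt_id x') (hasFDerivAt_const q' x')
    set J := (ContinuousLinearMap.id ℝ (E n)).prod (0 : E n →L[ℝ] E m) with hJ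
    have hQx : HasFDerivAt (fun x : E n => Q (x, q')) (DQ.comp J) x' :=
      (hQ (x', q')).hasFDerivAt.comp x' hi
    have hYx : HasFDerivAt (fun x : E n => Y' (x, q')) (DY.comp J) x' :=
      (hY' (x', q')).hasFDerivAt.comp x' hi
    have hψY : HasFDerivAt (fun x : E n => ψ (Y' (x, q'))) (Dψ.comp (DY.comp J)) x' :=
      (hψd Yp).hasFDerivAt.comp x' hYx
    have hξx : HasFDerivAt (fun x : E n => ξ x) Dξ x' := (hξd x').hasFDerivAt
    have hSx : HasFDerivAt (fun x : E n => S (ξ x, Q (x, q')))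
        (DS.comp (Dξ.prod (DQ.comp J))) x' :=
      (hSd (ξ x', Qp)).hasFDerivAt.comp x' (HasFDerivAt.prodMk hξx hQx)
    have hI1 : HasFDerivAt (fun x : E n => ⟪ψ (Y' (x, q')), Q (x, q')⟫)
        ((fderivInnerCLM ℝ (ψ Yp, Qp)).comp ((Dψ.comp (DY.comp J)).prod (DQ.comp J))) x' :=
      HasFDerivAt.inner ℝ hψY hQx
    have hI2 : HasFDerivAt (fun x : E n => ⟪Y' (x, q'), q'⟫)
        ((fderivInnerCLM ℝ (Yp, q')).comp
          ((DY.comp J).prod (0 : E n →L[ℝ] E m))) x' :=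
      HasFDerivAt.inner ℝ hYx (hasFDerivAt_const q' x')
    have hg : HasFDerivAt (fun x : E n => S (ξ x, Q (x, q'))
          - ⟪ψ (Y' (x, q')), Q (x, q')⟫ + ⟪Y' (x, q'), q'⟫)
        ((DS.comp (Dξ.prod (DQ.comp J)))
          - ((fderivInnerCLM ℝ (ψ Yp, Qp)).comp
              ((Dψ.comp (DY.comp J)).prod (DQ.comp J)))
          + ((fderivInnerCLM ℝ (Yp, q')).comp
              ((DY.comp J).prod (0 : E n →L[ℝ] E m)))) x' :=
      (hSx.sub hI1).add hI2
    have hfun : (fun x'' => S' (x'', q')) = fun x : E n => S (ξ x, Q (x, q'))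
        - ⟪ψ (Y' (x, q')), Q (x, q')⟫ + ⟪Y' (x, q'), q'⟫ :=
      funext fun x => hS' x q'
    rw [hfun]
    have hgrad : HasGradientAt (fun x : E n => S (ξ x, Q (x, q'))
        - ⟪ψ (Y' (x, q')), Q (x, q')⟫ + ⟪Y' (x, q'), q'⟫)
        (ContinuousLinearMap.adjoint Dξ (gradient (fun x => S (x, Qp)) (ξ x'))) x' := by
      rw [hasGradientAt_iff_hasFDerivAt]
      refine HasFDerivAt.congr_fderiv hg ?_
      apply ContinuousLinearMap.ext
      intro u
      simp only [InnerProductSpace.toDual_apply_apply, ContinuousLinearMap.add_apply,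
        ContinuousLinearMap.sub_apply, ContinuousLinearMap.comp_apply,
        ContinuousLinearMap.prod_apply, ContinuousLinearMap.zero_apply,
        ContinuousLinearMap.id_apply, fderivInnerCLM_apply, hJ]
      rw [ContinuousLinearMap.adjoint_inner_left,
        hsplit (Dξ u) (DQ (u, 0)),
        fact1 (DQ (u, 0)), fact1x (Dξ u),
        fact2 (DY (u, 0)), inner_zero_right]
      ring
    exact hgrad.gradient
end
end

section
/- Let S : ℝⁿ × ℝᵐ → ℝ, ξ : ℝⁿ → ℝⁿ, ψ : ℝᵐ → ℝᵐ be smooth, and let Y′, Q : ℝⁿ × ℝᵐ → ℝᵐ be C¹ maps satisfying, for all (x′, q′): (a) ψ(Y′(x′, q′)) = ∂S/∂q(ξ(x′), Q(x′, q′)) and (b) q′ = (Dψ(Y′(x′, q′)))ᵀ Q(x′, q′). Fix x′ ∈ ℝⁿ and assume the Jacobian Dψ(Y′(x′, 0)) is invertible. Then: (i) Q(x′, 0) = 0; (ii) ψ(Y′(x′, 0)) = φ(ξ(x′)), where φ(x) := ∂S/∂q(x, 0) (so the first-order coefficient of the transformed generating function is Y′(x′, 0) = ψ⁻¹(φ(ξ(x′))));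 (iii) the partial Jacobian of Y′ in q′ at (x′, 0) satisfies ∂Y′/∂q′(x′, 0) = Dψ(Y′(x′, 0))⁻¹ ∘ ∂²S/∂q²(ξ(x′), 0) ∘ (Dψ(Y′(x′, 0))⁻¹)ᵀ, i.e., the second-order coefficient matrix Sᶦʲ of the generating function transforms by the tensor law Sᶦ′ʲ′ = (∂y′/∂y) Sᶦʲ (∂y′/∂y)ᵀ evaluated along φ. -/
open scoped RealInnerProductSpace

noncomputable section

/-- Expansion of the transformed generating function: at `q′ = 0`, one has `Q = 0`, the
first-order coefficient is `ψ⁻¹ ∘ φ ∘ ξ` (where `φ(x) = ∂S/∂q(x,0)`), and the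
second-order coefficient transforms by the tensor law
`S′ = (Dψ)⁻¹ ∘ ∂²S/∂q² ∘ ((Dψ)⁻¹)ᵀ`. -/
theorem transformed_generating_function_expansion
    (n m : ℕ) (S : E n × E m → ℝ) (ξ : E n → E n) (ψ : E m → E m)
    (hS : ContDiff ℝ (⊤ : ℕ∞) S) (hξ : ContDiff ℝ (⊤ : ℕ∞) ξ) (hψ : ContDiff ℝ (⊤ : ℕ∞) ψ)
    (Y' Q : E n × E m → E m)
    (hY' : ContDiff ℝ 1 Y') (hQ : ContDiff ℝ 1 Q)
    (ha : ∀ (x' : E n) (q' : E m),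
      ψ (Y' (x', q')) = gradient (fun q => S (ξ x', q)) (Q (x', q')))
    (hb : ∀ (x' : E n) (q' : E m),
      q' = ContinuousLinearMap.adjoint (fderiv ℝ ψ (Y' (x', q'))) (Q (x', q')))
    (x' : E n) (J : E m →L[ℝ] E m)
    (hJ1 : J.comp (fderiv ℝ ψ (Y' (x', 0))) = ContinuousLinearMap.id ℝ (E m))
    (hJ2 : (fderiv ℝ ψ (Y' (x', 0))).comp J = ContinuousLinearMap.id ℝ (E m)) :
    Q (x', 0) = 0 ∧
    ψ (Y' (x', 0)) = gradient (fun q => S (ξ x', q)) 0 ∧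
    fderiv ℝ (fun q' => Y' (x', q')) 0 =
      J.comp ((fderiv ℝ (fun q => gradient (fun q'' => S (ξ x', q'')) q) 0).comp
        (ContinuousLinearMap.adjoint J)) := by
  have hadj1 : (ContinuousLinearMap.adjoint J).comp
      (ContinuousLinearMap.adjoint (fderiv ℝ ψ (Y' (x', 0))))
      = ContinuousLinearMap.id ℝ (E m) := by
    rw [← ContinuousLinearMap.adjoint_comp, hJ2, ContinuousLinearMap.adjoint_id]
  -- (i)
  have hQ0 : Q (x', 0) = 0 := by
    have h0 := hb x' 0
    have h1 := congrArg (ContinuousLinearMap.adjoint J) h0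
    simpa [← ContinuousLinearMap.comp_apply, hadj1] using h1.symm
  refine ⟨hQ0, ?_, ?_⟩
  · rw [ha x' 0, hQ0]
  -- (iii)
  · set F : E m → E m := fun q' => Y' (x', q') with hFdef
    set Qf : E m → E m := fun q' => Q (x', q') with hQfdef
    set g : E m → E m := fun q => gradient (fun q'' => S (ξ x', q'')) q with hgdef
    have hF0 : F 0 = Y' (x', 0) := rfl
    have hQf0 : Qf 0 = 0 := hQ0
    have hincl : DifferentiableAt ℝ (fun q' : E m => ((x', q') : E n × E m)) 0 :=
      (differentiableAt_const x').prodMk differentiableAt_id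
    have hF : DifferentiableAt ℝ F 0 :=
      ((hY'.differentiable one_ne_zero) (x', 0)).comp 0 hincl
    have hQf : DifferentiableAt ℝ Qf 0 :=
      ((hQ.differentiable one_ne_zero) (x', 0)).comp 0 hincl
    have hf : ContDiff ℝ (⊤ : ℕ∞) (fun q : E m => S (ξ x', q)) :=
      hS.comp ((contDiff_const).prodMk contDiff_id)
    have hg : Differentiable ℝ g := by
      have h1 : ContDiff ℝ (⊤ : ℕ∞) (fderiv ℝ (fun q : E m => S (ξ x', q))) :=
        hf.fderiv_right (by simp)
      have h2 : g = fun q => (InnerProductSpace.toDual ℝ (E m)).symm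
          (fderiv ℝ (fun q : E m => S (ξ x', q)) q) := rfl
      rw [h2]
      exact ((InnerProductSpace.toDual ℝ (E m)).symm.differentiable).comp
        (h1.differentiable (by simp))
    have hFd : HasFDerivAt F (fderiv ℝ F 0) 0 := hF.hasFDerivAt
    have hQd : HasFDerivAt Qf (fderiv ℝ Qf 0) 0 := hQf.hasFDerivAt
    have hψd : HasFDerivAt ψ (fderiv ℝ ψ (Y' (x', 0))) (F 0) :=
      ((hψ.differentiable (by simp)) (F 0)).hasFDerivAt
    have hgd : HasFDerivAt g (fderiv ℝ g 0) (Qf 0) := by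
      rw [hQf0]; exact (hg 0).hasFDerivAt
    -- differentiability of the adjoint-of-Jacobian map
    have hbl : IsBoundedLinearMap ℝ
        (fun L : E m →L[ℝ] E m => ContinuousLinearMap.adjoint L) := by
      refine ⟨⟨fun x y => map_add _ x y, fun c x => ?_⟩, 1, one_pos, fun x => ?_⟩
      · simpa using map_smulₛₗ (ContinuousLinearMap.adjoint
          (E := E m) (F := E m) (𝕜 := ℝ)) c x
      · rw [one_mul]
        exact le_of_eq
          ((ContinuousLinearMap.adjoint (E := E m) (F := E m) (𝕜 := ℝ)).norm_map x)
    have h1ψ : Differentiable ℝ (fderiv ℝ ψ) := (hψ.fderiv_right (m := (⊤ : ℕ∞)) (by simp)).differentiable (by simp)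
    have hTT : DifferentiableAt ℝ (fun q' : E m => fderiv ℝ ψ (F q')) 0 :=
      (h1ψ (F 0)).comp 0 hF
    have hT : DifferentiableAt ℝ
        (fun q' : E m => ContinuousLinearMap.adjoint (fderiv ℝ ψ (F q'))) 0 :=
      ((hbl.differentiable (fderiv ℝ ψ (F 0))).comp 0 hTT)
    -- differentiate identity (b)
    have hid2 : HasFDerivAt (fun q' : E m => q') (ContinuousLinearMap.id ℝ (E m)) 0 :=
      hasFDerivAt_id 0
    have heqb : (fun q' : E m => q') = fun q' : E m =>
        (ContinuousLinearMap.adjoint (fderiv ℝ ψ (F q'))) (Qf q') := by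
      funext q'; exact hb x' q'
    have hb' : ContinuousLinearMap.id ℝ (E m)
        = (ContinuousLinearMap.adjoint (fderiv ℝ ψ (Y' (x', 0)))).comp (fderiv ℝ Qf 0) := by
      have h3 := hT.hasFDerivAt.clm_apply hQd
      rw [← heqb] at h3
      have h4 := hid2.unique h3
      rw [h4, hQf0, ContinuousLinearMap.map_zero, add_zero, hF0]
    have hDQ : fderiv ℝ Qf 0 = ContinuousLinearMap.adjoint J := by
      have h := congrArg (fun L => (ContinuousLinearMap.adjoint J).comp L) hb'
      simp only [ContinuousLinearMap.comp_id, ← ContinuousLinearMap.comp_assoc,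
        hadj1, ContinuousLinearMap.id_comp] at h
      exact h.symm
    -- differentiate identity (a)
    have heqa : (fun q' : E m => ψ (F q')) = fun q' : E m => g (Qf q') := by
      funext q'; exact ha x' q'
    have hlhs : HasFDerivAt (fun q' : E m => ψ (F q'))
        ((fderiv ℝ ψ (Y' (x', 0))).comp (fderiv ℝ F 0)) 0 := hψd.comp 0 hFd
    have hrhs : HasFDerivAt (fun q' : E m => g (Qf q'))
        ((fderiv ℝ g 0).comp (fderiv ℝ Qf 0)) 0 := hgd.comp 0 hQd
    have hmain : (fderiv ℝ ψ (Y' (x', 0))).comp (fderiv ℝ F 0)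
        = (fderiv ℝ g 0).comp (fderiv ℝ Qf 0) := by
      rw [heqa] at hlhs; exact hlhs.unique hrhs
    calc fderiv ℝ F 0 = (ContinuousLinearMap.id ℝ (E m)).comp (fderiv ℝ F 0) := by
          rw [ContinuousLinearMap.id_comp]
      _ = J.comp ((fderiv ℝ ψ (Y' (x', 0))).comp (fderiv ℝ F 0)) := by
          rw [← hJ1, ContinuousLinearMap.comp_assoc]
      _ = J.comp ((fderiv ℝ g 0).comp (ContinuousLinearMap.adjoint J)) := by
          rw [hmain, hDQ]
end
end
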